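/- arXiv:1011.0241 — 2 statements merged into one kernel-verified Lean document; each statement's English description precedes it below -/
import Mathlib

section
/- Let Φ be a real m×n matrix, Θ a real m×q matrix, and let x_1,…,x_N ∈ ℝⁿ and b_1,…,b_N ∈ ℝ^q be finite families such that Φ xᵢ = Θ bᵢ for every i = 1,…,N. Define C_sr = Σᵢ xᵢ bᵢᵀ (an n×q matrix) and C_rr = Σᵢ bᵢ bᵢᵀ (a q×q matrix), and assume C_rr is invertible. Then, with RM = C_sr · C_rr⁻¹, one has Θ = Φ · RM. -/
open Matrix BigOperators

theorem Matrix.mul_sum_mul_eq_mul_sum_mul {ι R l m n p q : Type*} [Fintype ι] [Semiring R]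
    [Fintype m] [Fintype n] [Fintype p] {Φ : Matrix l m R} {Θ : Matrix l n R}
    {x : ι → Matrix m p R} {b : ι → Matrix n p R} (h : ∀ i, Φ * x i = Θ * b i)
    (c : ι → Matrix p q R) :
    Φ * ∑ i, x i * c i = Θ * ∑ i, b i * c i := by
  simp only [Matrix.mul_sum, ← Matrix.mul_assoc, h]

/-- **Theorem 1 (finite-sample form).** If `Φ xᵢ = Θ bᵢ` for all `i`, and the response
autocorrelation matrix `C_rr = Σᵢ bᵢ bᵢᵀ` is invertible, then with
`RM = C_sr · C_rr⁻¹` (where `C_sr = Σᵢ xᵢ bᵢᵀ`) we have `Θ = Φ · RM`. -/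
theorem acs_theorem1_finite
    {m n q N : ℕ}
    (Φ : Matrix (Fin m) (Fin n) ℝ) (Θ : Matrix (Fin m) (Fin q) ℝ)
    (x : Fin N → Matrix (Fin n) (Fin 1) ℝ) (b : Fin N → Matrix (Fin q) (Fin 1) ℝ)
    (hmeas : ∀ i, Φ * x i = Θ * b i)
    (Csr : Matrix (Fin n) (Fin q) ℝ) (hCsr : Csr = ∑ i, x i * (b i)ᵀ)
    (Crr : Matrix (Fin q) (Fin q) ℝ) (hCrr : Crr = ∑ i, b i * (b i)ᵀ)
    (hinv : IsUnit Crr)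
    (RM : Matrix (Fin n) (Fin q) ℝ) (hRM : RM = Csr * Crr⁻¹) :
    Θ = Φ * RM := by
  have hcorr : Φ * Csr = Θ * Crr := by
    rw [hCsr, hCrr]
    exact mul_sum_mul_eq_mul_sum_mul hmeas fun i => (b i)ᵀ
  rw [hRM, ← Matrix.mul_assoc, hcorr,
    mul_nonsing_inv_cancel_right _ _ ((isUnit_iff_isUnit_det Crr).mp hinv)]
end

section
/- Let (Ω, 𝒜, μ) be a probability space, Φ a real m×n matrix, Θ a real m×q matrix, and let X : Ω → ℝⁿ and B : Ω → ℝ^q be measurable maps such that each entry of the matrix-valued map ω ↦ X(ω) B(ω)ᵀ and of ω ↦ B(ω) B(ω)ᵀ is integrable, and such that Φ X(ω) = Θ B(ω) for μ-almost every ω. Define C_sr to be the n×q matrix with entries (C_sr)_{jk} = ∫ X(ω)_j B(ω)_k dμ and C_rr the q×q matrix with entries (C_rr)_{kl} = ∫ B(ω)_k B(ω)_l dμ, and assume C_rr is invertible. Then, with RM = C_sr · C_rr⁻¹, one has Θ = Φ · RM. -/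
open Matrix MeasureTheory BigOperators

/-! The defining relation `Φ X = Θ B` holds pointwise a.e.; multiplying it on the right by `Bᵀ`
and taking expectations (which commutes with constant matrix factors) gives
`Φ C_sr = Θ C_rr`, and right multiplication by `C_rr⁻¹` yields `Θ = Φ · RM`. -/

namespace MeasureTheory

variable {Ω ι κ ρ 𝕜 : Type*} [MeasurableSpace Ω] [RCLike 𝕜]

noncomputable def crossMoment (μ : Measure Ω) (Y : Ω → κ → 𝕜) (Z : Ω → ρ → 𝕜) : Matrix κ ρ 𝕜 :=
  Matrix.of fun j k => ∫ ω, Y ω j * Z ω k ∂μ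

theorem crossMoment_congr_ae {μ : Measure Ω} {Y Y' : Ω → ι → 𝕜} (Z : Ω → ρ → 𝕜)
    (h : Y =ᵐ[μ] Y') : crossMoment μ Y Z = crossMoment μ Y' Z := by
  ext j k
  exact integral_congr_ae (h.mono fun ω hω => by simp only [hω])

theorem mul_crossMoment [Fintype κ] {μ : Measure Ω} (A : Matrix ι κ 𝕜) {Y : Ω → κ → 𝕜}
    {Z : Ω → ρ → 𝕜} (hYZ : ∀ j k, Integrable (fun ω => Y ω j * Z ω k) μ) :
    A * crossMoment μ Y Z = crossMoment μ (fun ω => A *ᵥ Y ω) Z := by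
  ext i k
  simp only [crossMoment, mul_apply, of_apply, mulVec, dotProduct, Finset.sum_mul, mul_assoc]
  rw [integral_finsetSum _ fun j _ => (hYZ j k).const_mul (A i j)]
  simp only [integral_const_mul]

end MeasureTheory

theorem acs_theorem1_ensemble_general
    {m n q : ℕ} {Ω : Type*} [MeasurableSpace Ω]
    (μ : Measure Ω)
    (Φ : Matrix (Fin m) (Fin n) ℝ) (Θ : Matrix (Fin m) (Fin q) ℝ)
    (X : Ω → Fin n → ℝ) (B : Ω → Fin q → ℝ)
    (hXBint : ∀ j k, Integrable (fun ω => X ω j * B ω k) μ)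
    (hBBint : ∀ k l, Integrable (fun ω => B ω k * B ω l) μ)
    (hmeas : ∀ᵐ ω ∂μ, Φ.mulVec (X ω) = Θ.mulVec (B ω))
    (Csr : Matrix (Fin n) (Fin q) ℝ)
    (hCsr : Csr = Matrix.of fun j k => ∫ ω, X ω j * B ω k ∂μ)
    (Crr : Matrix (Fin q) (Fin q) ℝ)
    (hCrr : Crr = Matrix.of fun k l => ∫ ω, B ω k * B ω l ∂μ)
    (hinv : IsUnit Crr)
    (RM : Matrix (Fin n) (Fin q) ℝ) (hRM : RM = Csr * Crr⁻¹) :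
    Θ = Φ * RM := by
  have normal_eq : Φ * Csr = Θ * Crr := by
    change Csr = crossMoment μ X B at hCsr
    change Crr = crossMoment μ B B at hCrr
    rw [hCsr, hCrr, mul_crossMoment Φ hXBint, mul_crossMoment Θ hBBint,
      crossMoment_congr_ae B hmeas]
  rw [hRM, ← Matrix.mul_assoc, normal_eq, Matrix.mul_assoc,
    Matrix.mul_nonsing_inv _ ((Matrix.isUnit_iff_isUnit_det Crr).mp hinv), Matrix.mul_one]

/-- **Theorem 1 (ensemble/expectation form).** Let `(Ω, 𝒜, μ)` be a probability space and
`X : Ω → ℝⁿ`, `B : Ω → ℝ^q` measurable maps with entrywise-integrable `X Bᵀ` and `B Bᵀ`,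
such that `Φ X = Θ B` almost everywhere.  If `C_rr = E[B Bᵀ]` is invertible, then with
`C_sr = E[X Bᵀ]` and `RM = C_sr · C_rr⁻¹` we have `Θ = Φ · RM`. -/
theorem acs_theorem1_ensemble
    {m n q : ℕ} {Ω : Type*} [MeasurableSpace Ω]
    (μ : Measure Ω) [IsProbabilityMeasure μ]
    (Φ : Matrix (Fin m) (Fin n) ℝ) (Θ : Matrix (Fin m) (Fin q) ℝ)
    (X : Ω → Fin n → ℝ) (B : Ω → Fin q → ℝ)
    (hXmeas : Measurable X) (hBmeas : Measurable B)
    (hXBint : ∀ j k, Integrable (fun ω => X ω j * B ω k) μ)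
    (hBBint : ∀ k l, Integrable (fun ω => B ω k * B ω l) μ)
    (hmeas : ∀ᵐ ω ∂μ, Φ.mulVec (X ω) = Θ.mulVec (B ω))
    (Csr : Matrix (Fin n) (Fin q) ℝ)
    (hCsr : Csr = Matrix.of fun j k => ∫ ω, X ω j * B ω k ∂μ)
    (Crr : Matrix (Fin q) (Fin q) ℝ)
    (hCrr : Crr = Matrix.of fun k l => ∫ ω, B ω k * B ω l ∂μ)
    (hinv : IsUnit Crr)
    (RM : Matrix (Fin n) (Fin q) ℝ) (hRM : RM = Csr * Crr⁻¹) :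
    Θ = Φ * RM :=
  acs_theorem1_ensemble_general μ Φ Θ X B hXBint hBBint hmeas Csr hCsr Crr hCrr hinv RM hRM
end
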